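/- arXiv:2102.07326 — 2 statements merged into one kernel-verified Lean document; each statement's English description precedes it below -/
import Mathlib

section
/- The function φ(p) = (2p² + 15p + 19)/(3(p+3)(2p+3)) is strictly decreasing on (0, ∞), with φ(p) → 19/27 as p → 0⁺ and φ(p) → 1/3 as p → ∞. In particular, for every target ratio φ₀ ∈ (1/3, 19/27) there exists a unique p > 0 with φ(p) = φ₀. -/
/-!
In partial fractions, `φ p = 1/3 + 8 / (9 (p + 3)) + 2 / (9 (2p + 3))`. Both fractions decrease
strictly to `0` on `p > -3/2`, which gives the monotonicity and the limit `1/3` at infinity, and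
`φ` is continuous at `0` with `φ 0 = 19/27`. The intermediate value theorem on the connected set
`(0, ∞)` then gives every value between the two limits, and strict monotonicity makes the
preimage unique.
-/

open Filter Set

open scoped Topology

theorem StrictAntiOn.existsUnique_mem_Ioi_eq_of_tendsto {α δ : Type*}
    [ConditionallyCompleteLinearOrder α] [TopologicalSpace α] [OrderTopology α]
    [DenselyOrdered α] [NoMaxOrder α] [LinearOrder δ] [TopologicalSpace δ]
    [OrderClosedTopology δ] {f : α → δ} {a : α} {l m : δ}
    (hf : StrictAntiOn f (Ioi a)) (hc : ContinuousOn f (Ioi a))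
    (hl : Tendsto f (𝓝[>] a) (𝓝 l)) (hm : Tendsto f atTop (𝓝 m)) :
    ∀ y ∈ Ioo m l, ∃! x, a < x ∧ f x = y := by
  intro y hy
  obtain ⟨x, hx, rfl⟩ := isPreconnected_Ioi.intermediate_value_Ioo
    (le_principal_iff.2 (Ioi_mem_atTop a)) (le_principal_iff.2 self_mem_nhdsWithin) hc hm hl hy
  exact ⟨x, ⟨hx, rfl⟩, fun x' hx' => hf.injOn hx'.1 hx hx'.2⟩

noncomputable def decelRatio (p : ℝ) : ℝ :=
  (2 * p ^ 2 + 15 * p + 19) / (3 * (p + 3) * (2 * p + 3))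

theorem decelRatio_eq_partialFractions {p : ℝ} (hp : -3 / 2 < p) :
    decelRatio p = 1 / 3 + 8 / (9 * (p + 3)) + 2 / (9 * (2 * p + 3)) := by
  have h₁ : p + 3 ≠ 0 := by linarith
  have h₂ : 2 * p + 3 ≠ 0 := by linarith
  rw [decelRatio]
  field_simp
  ring

theorem continuousAt_decelRatio {p : ℝ} (hp : -3 / 2 < p) : ContinuousAt decelRatio p :=
  ContinuousAt.div (by fun_prop) (by fun_prop) (by nlinarith)

theorem strictAntiOn_decelRatio : StrictAntiOn decelRatio (Ioi (-3 / 2)) := by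
  intro a ha b hb hab
  rw [mem_Ioi] at ha hb
  rw [decelRatio_eq_partialFractions ha, decelRatio_eq_partialFractions hb]
  have h₁ : 8 / (9 * (b + 3)) < 8 / (9 * (a + 3)) := by
    apply div_lt_div_of_pos_left <;> linarith
  have h₂ : 2 / (9 * (2 * b + 3)) < 2 / (9 * (2 * a + 3)) := by
    apply div_lt_div_of_pos_left <;> linarith
  linarith

theorem tendsto_decelRatio_nhdsGT_zero : Tendsto decelRatio (𝓝[>] 0) (𝓝 (19 / 27)) := by
  have h := (continuousAt_decelRatio (by norm_num : (-3 / 2 : ℝ) < 0)).tendsto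
  rw [show decelRatio 0 = 19 / 27 by norm_num [decelRatio]] at h
  exact h.mono_left nhdsWithin_le_nhds

theorem tendsto_decelRatio_atTop : Tendsto decelRatio atTop (𝓝 (1 / 3)) := by
  have h₁ : Tendsto (fun p : ℝ => 8 / (9 * (p + 3))) atTop (𝓝 0) :=
    tendsto_const_nhds.div_atTop
      ((tendsto_atTop_add_const_right _ 3 tendsto_id).const_mul_atTop (by norm_num))
  have h₂ : Tendsto (fun p : ℝ => 2 / (9 * (2 * p + 3))) atTop (𝓝 0) :=
    tendsto_const_nhds.div_atTop
      ((tendsto_atTop_add_const_right _ 3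
        (tendsto_id.const_mul_atTop (by norm_num))).const_mul_atTop (by norm_num))
  have h := (tendsto_const_nhds (x := (1 / 3 : ℝ))).add h₁ |>.add h₂
  rw [add_zero, add_zero] at h
  refine h.congr' ?_
  filter_upwards [eventually_gt_atTop 0] with p hp
  exact (decelRatio_eq_partialFractions (by linarith)).symm

theorem stmt_7 (φ : ℝ → ℝ)
    (hφ : ∀ p : ℝ, φ p = (2 * p ^ 2 + 15 * p + 19) / (3 * (p + 3) * (2*p + 3))) :
    StrictAntiOn φ (Set.Ioi 0) ∧
    Tendsto φ (nhdsWithin 0 (Set.Ioi 0)) (nhds (19/27)) ∧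
    Tendsto φ atTop (nhds (1/3)) ∧
    (∀ φ₀ ∈ Set.Ioo (1/3 : ℝ) (19/27), ∃! p : ℝ, 0 < p ∧ φ p = φ₀) := by
  obtain rfl : φ = decelRatio := funext hφ
  have hanti : StrictAntiOn decelRatio (Ioi 0) :=
    strictAntiOn_decelRatio.mono (Ioi_subset_Ioi (by norm_num))
  have hcont : ContinuousOn decelRatio (Ioi 0) := fun p hp =>
    (continuousAt_decelRatio (by linarith [mem_Ioi.1 hp])).continuousWithinAt
  exact ⟨hanti, tendsto_decelRatio_nhdsGT_zero, tendsto_decelRatio_atTop,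
    StrictAntiOn.existsUnique_mem_Ioi_eq_of_tendsto hanti hcont tendsto_decelRatio_nhdsGT_zero
      tendsto_decelRatio_atTop⟩
end

section
/- Let p > 0, r = (1+2p)^{2+1/p}/(4p²), and define a_p(θ) = rαθ(1-θ^p)² for a constant α < 0. Then for all θ ∈ [0,1], α ≤ a_p(θ) ≤ 0, i.e., the deceleration profile is bounded between the peak deceleration α and zero. -/
/-!
Put `x = θ ^ p`, so `θ (1 - θ ^ p) ^ 2 = x ^ (1/p) (1 - x) ^ 2`. Weighted AM–GM with weights
`1/p` and `2` on `x` and `(1 - x) / (2p)` shows that this is at most `4p² / (1 + 2p) ^ (2 + 1/p)`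
(attained at `x = 1 / (1 + 2p)`), i.e. `0 ≤ r θ (1 - θ ^ p) ^ 2 ≤ 1`; multiplying by `α < 0`
gives the claim.
-/

open Real

theorem Real.rpow_mul_rpow_le_weighted_mean_rpow {a b x y : ℝ} (ha : 0 ≤ a) (hb : 0 ≤ b)
    (hab : 0 < a + b) (hx : 0 ≤ x) (hy : 0 ≤ y) :
    x ^ a * y ^ b ≤ ((a * x + b * y) / (a + b)) ^ (a + b) := by
  have hmean : x ^ (a / (a + b)) * y ^ (b / (a + b)) ≤ (a * x + b * y) / (a + b) := by
    convert geom_mean_le_arith_mean2_weighted (div_nonneg ha hab.le) (div_nonneg hb hab.le)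
      hx hy (by field_simp) using 1
    field_simp
  calc x ^ a * y ^ b
      = (x ^ (a / (a + b)) * y ^ (b / (a + b))) ^ (a + b) := by
        rw [mul_rpow (by positivity) (by positivity), ← rpow_mul hx, ← rpow_mul hy,
          div_mul_cancel₀ _ hab.ne', div_mul_cancel₀ _ hab.ne']
    _ ≤ ((a * x + b * y) / (a + b)) ^ (a + b) := by gcongr

theorem mul_one_sub_rpow_sq_le {p θ : ℝ} (hp : 0 < p) (hθ : θ ∈ Set.Icc (0 : ℝ) 1) :
    θ * (1 - θ ^ p) ^ 2 ≤ 4 * p ^ 2 / (1 + 2 * p) ^ (2 + 1 / p) := by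
  obtain ⟨hθ0, hθ1⟩ := hθ
  set x := θ ^ p
  have hx0 : 0 ≤ x := rpow_nonneg hθ0 p
  have hx1 : x ≤ 1 := rpow_le_one hθ0 hθ1 hp.le
  have hθx : x ^ (1 / p) = θ := by
    rw [← rpow_mul hθ0, mul_one_div_cancel hp.ne', rpow_one]
  have hamgm := rpow_mul_rpow_le_weighted_mean_rpow (a := 1 / p) (b := 2) (by positivity)
    zero_le_two (by positivity) hx0 (div_nonneg (sub_nonneg.2 hx1) (by positivity : 0 ≤ 2 * p))
  have hmean : (1 / p * x + 2 * ((1 - x) / (2 * p))) / (1 / p + 2) = (1 + 2 * p)⁻¹ := by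
    field_simp
    ring
  rw [hθx, hmean, inv_rpow (by positivity), rpow_two, add_comm (1 / p)] at hamgm
  rw [le_div_iff₀ (by positivity)]
  calc θ * (1 - x) ^ 2 * (1 + 2 * p) ^ (2 + 1 / p)
      = 4 * p ^ 2 * (θ * ((1 - x) / (2 * p)) ^ 2 * (1 + 2 * p) ^ (2 + 1 / p)) := by
        field_simp
        ring
    _ ≤ 4 * p ^ 2 * ((1 + 2 * p) ^ (2 + 1 / p))⁻¹ * (1 + 2 * p) ^ (2 + 1 / p) := by
        rw [mul_assoc (4 * p ^ 2)]
        gcongr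
    _ = 4 * p ^ 2 := by
        rw [mul_assoc, inv_mul_cancel₀ (by positivity), mul_one]

theorem stmt_12 (p α r : ℝ) (hp : 0 < p) (hα : α < 0)
    (hr : r = (1 + 2*p) ^ (2 + 1/p) / (4 * p ^ 2)) :
    ∀ θ ∈ Set.Icc (0:ℝ) 1,
      α ≤ r * α * θ * (1 - θ ^ p) ^ 2 ∧ r * α * θ * (1 - θ ^ p) ^ 2 ≤ 0 := by
  intro θ hθ
  have hprofile_nonneg : 0 ≤ r * θ * (1 - θ ^ p) ^ 2 := by
    have := hθ.1
    rw [hr]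
    positivity
  have hprofile_le_one : r * θ * (1 - θ ^ p) ^ 2 ≤ 1 := by
    rw [hr, mul_assoc, div_mul_eq_mul_div, div_le_one (by positivity), mul_comm,
      ← le_div_iff₀ (by positivity)]
    exact mul_one_sub_rpow_sq_le hp hθ
  have hrewrite : r * α * θ * (1 - θ ^ p) ^ 2 = α * (r * θ * (1 - θ ^ p) ^ 2) := by ring
  rw [hrewrite]
  exact ⟨by nlinarith, mul_nonpos_of_nonpos_of_nonneg hα.le hprofile_nonneg⟩
end
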